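/- Let n ≥ 1, let γ₁, …, γₙ > 0, set Γ = diag(γ₁, …, γₙ, γ₁, …, γₙ) ∈ ℝ^(2n×2n) and √(2Γ) = diag(√(2γ₁), …, √(2γₙ), √(2γ₁), …, √(2γₙ)), and let 𝓜 ∈ ℝ^(2n×2n) be Hamiltonian, i.e. (Ω𝓜)ᵀ = Ω𝓜 where Ω = [[0, Iₙ], [−Iₙ, 0]]. For ω ∈ ℝ such that iωI + Γ − 𝓜 is invertible (as a complex matrix), define S(ω) = √(2Γ)(iωI + Γ − 𝓜)⁻¹√(2Γ) − I. Then S(ω) is conjugate symplectic: S(ω) Ω S(ω)† = Ω. -/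

import Mathlib

/-! Write `A = iωI + Γ − 𝓜`, `C = −iωI + Γ + 𝓜` and `D = √(2Γ)`. Then `A + C = 2Γ = D²`, and,
since `𝓜` is Hamiltonian and the paired damping `Γ` commutes with `Ω`, `Ω A† = C Ω`. The first
identity makes `D C⁻¹ D − I` a right inverse of `S = D A⁻¹ D − I`; the second conjugates `S†` by
`Ω` into `D C⁻¹ D − I`, whence `S Ω S† = S (D C⁻¹ D − I) Ω = Ω`. -/

open Matrix

/-- The standard `2n × 2n` symplectic form `Ω = [[0, Iₙ], [−Iₙ, 0]]` over ℂ. -/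
def Omega (n : ℕ) : Matrix (Fin n ⊕ Fin n) (Fin n ⊕ Fin n) ℂ :=
  Matrix.fromBlocks 0 1 (-1) 0

/-- The standard `2n × 2n` symplectic form over ℝ. -/
def OmegaR (n : ℕ) : Matrix (Fin n ⊕ Fin n) (Fin n ⊕ Fin n) ℝ :=
  Matrix.fromBlocks 0 1 (-1) 0

/-- A matrix `A ∈ ℂ^(2n×2n)` is conjugate symplectic if `A Ω A† = Ω`. -/
def ConjSymplectic {n : ℕ} (A : Matrix (Fin n ⊕ Fin n) (Fin n ⊕ Fin n) ℂ) : Prop :=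
  A * Omega n * Aᴴ = Omega n

/-- The transfer function `S(ω) = √(2Γ)(iωI + Γ − 𝓜)⁻¹√(2Γ) − I` with paired damping
rates `Γ = diag(γ₁, …, γₙ, γ₁, …, γₙ)`. -/
noncomputable def transferFun (n : ℕ) (γ : Fin n → ℝ)
    (M : Matrix (Fin n ⊕ Fin n) (Fin n ⊕ Fin n) ℝ) (ω : ℝ) :
    Matrix (Fin n ⊕ Fin n) (Fin n ⊕ Fin n) ℂ :=
  diagonal (fun i => ((Real.sqrt (2 * Sum.elim γ γ i) : ℝ) : ℂ)) *
    ((Complex.I * (ω : ℂ)) • (1 : Matrix (Fin n ⊕ Fin n) (Fin n ⊕ Fin n) ℂ) +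
      diagonal (fun i => ((Sum.elim γ γ i : ℝ) : ℂ)) - M.map Complex.ofReal)⁻¹ *
    diagonal (fun i => ((Real.sqrt (2 * Sum.elim γ γ i) : ℝ) : ℂ)) - 1

namespace Matrix

variable {m R : Type*} [Fintype m] [DecidableEq m] [CommRing R]

theorem mul_nonsing_inv_eq_of_semiconj {O X Y : Matrix m m R} (hO : IsUnit O)
    (h : O * X = Y * O) : O * X⁻¹ = Y⁻¹ * O := by
  have hOdet := (isUnit_iff_isUnit_det O).mp hO
  have hY : Y = O * X * O⁻¹ := by rw [h, mul_nonsing_inv_cancel_right _ _ hOdet]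
  rw [hY, mul_inv_rev, mul_inv_rev, nonsing_inv_nonsing_inv _ hOdet, mul_assoc,
    nonsing_inv_mul_cancel_right _ _ hOdet]

theorem isUnit_iff_of_semiconj {O X Y : Matrix m m R} (hO : IsUnit O)
    (h : O * X = Y * O) : IsUnit X ↔ IsUnit Y := by
  have hOdet := (isUnit_iff_isUnit_det O).mp hO
  have hdet := congrArg (fun A => IsUnit (det A)) h
  simpa [det_mul, IsUnit.mul_iff, hOdet, isUnit_iff_isUnit_det] using hdet

theorem mul_inv_mul_sub_one_mul_inv_mul_sub_one {A C D : Matrix m m R}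
    (hAC : IsUnit A ↔ IsUnit C) (hsum : A + C = D * D) :
    (D * A⁻¹ * D - 1) * (D * C⁻¹ * D - 1) = 1 :=
  calc (D * A⁻¹ * D - 1) * (D * C⁻¹ * D - 1)
      = D * (A⁻¹ * (D * D) * C⁻¹) * D - D * A⁻¹ * D - D * C⁻¹ * D + 1 := by noncomm_ring
    _ = D * (A⁻¹ + C⁻¹) * D - D * A⁻¹ * D - D * C⁻¹ * D + 1 := by
      rw [← hsum, ← inv_add_inv hAC]
    _ = 1 := by noncomm_ring

section StarRing

variable [StarRing R]

theorem mul_conjTranspose_eq_neg_of_isHermitian_mul {O N : Matrix m m R}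
    (hO : Oᴴ = -O) (hOO : O * O = -1) (hN : (O * N).IsHermitian) :
    O * Nᴴ = -(N * O) := by
  have h : Nᴴ * O = -(O * N) := by
    rw [← neg_eq_iff_eq_neg, ← mul_neg, ← hO, ← conjTranspose_mul, hN.eq]
  calc O * Nᴴ = -(O * (Nᴴ * O) * O) := by
        rw [mul_assoc, mul_assoc, hOO, ← mul_assoc]; noncomm_ring
    _ = -(N * O) := by rw [h, mul_neg, ← mul_assoc, hOO]; noncomm_ring

theorem mul_conjTranspose_smul_one_add_sub {O Γ N : Matrix m m R} (z : R)
    (hΓ : Γ.IsHermitian) (hOΓ : Commute O Γ) (hN : O * Nᴴ = -(N * O)) :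
    O * (z • 1 + Γ - N)ᴴ = (star z • 1 + Γ + N) * O := by
  rw [conjTranspose_sub, conjTranspose_add, conjTranspose_smul, conjTranspose_one, hΓ.eq,
    mul_sub, mul_add, hN, hOΓ.eq, Matrix.mul_smul, mul_one, add_mul, add_mul, Matrix.smul_mul,
    one_mul]
  abel

theorem mul_mul_conjTranspose_eq_self {A C D O : Matrix m m R} (hO : IsUnit O)
    (hD : D.IsHermitian) (hOD : Commute O D) (hOA : O * Aᴴ = C * O) (hsum : A + C = D * D) :
    (D * A⁻¹ * D - 1) * O * (D * A⁻¹ * D - 1)ᴴ = O := by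
  have hAC : IsUnit A ↔ IsUnit C :=
    (isUnit_conjTranspose A).symm.trans (isUnit_iff_of_semiconj hO hOA)
  have hconj : O * (D * A⁻¹ * D - 1)ᴴ = (D * C⁻¹ * D - 1) * O := by
    have hOAinv := mul_nonsing_inv_eq_of_semiconj hO hOA
    simp only [conjTranspose_sub, conjTranspose_mul, conjTranspose_one,
      conjTranspose_nonsing_inv, hD.eq]
    calc O * (D * (Aᴴ⁻¹ * D) - 1) = O * D * Aᴴ⁻¹ * D - O := by noncomm_ring
      _ = D * (O * Aᴴ⁻¹) * D - O := by rw [hOD.eq]; noncomm_ring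
      _ = D * C⁻¹ * (O * D) - O := by rw [hOAinv]; noncomm_ring
      _ = (D * C⁻¹ * D - 1) * O := by rw [hOD.eq]; noncomm_ring
  rw [mul_assoc, hconj, ← mul_assoc, mul_inv_mul_sub_one_mul_inv_mul_sub_one hAC hsum, one_mul]

end StarRing

variable {ι : Type*} [DecidableEq ι]

theorem isHermitian_diagonal_ofReal (d : ι → ℝ) : (diagonal fun i => (d i : ℂ)).IsHermitian :=
  isHermitian_diagonal_iff.2 fun i => Complex.conj_ofReal (d i)

theorem diagonal_ofReal_sqrt_two_mul_self [Fintype ι] {d : ι → ℝ} (hd : ∀ i, 0 ≤ d i) :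
    (diagonal fun i => ((√(2 * d i) : ℝ) : ℂ)) * diagonal (fun i => ((√(2 * d i) : ℝ) : ℂ)) =
      2 • diagonal fun i => (d i : ℂ) := by
  rw [diagonal_mul_diagonal, ← diagonal_smul]
  congr 1; ext i
  rw [← Complex.ofReal_mul, Real.mul_self_sqrt (by linarith [hd i])]
  simp

end Matrix

section Omega

variable {n : ℕ}

theorem Omega_mul_Omega : Omega n * Omega n = -1 := by
  rw [Omega, fromBlocks_multiply, ← fromBlocks_one, fromBlocks_neg]
  simp

theorem isUnit_Omega : IsUnit (Omega n) :=
  IsUnit.of_mul_eq_one (-Omega n) (by rw [mul_neg, Omega_mul_Omega, neg_neg])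

theorem conjTranspose_Omega : (Omega n)ᴴ = -Omega n := by
  rw [Omega, fromBlocks_conjTranspose, fromBlocks_neg]
  simp

theorem Omega_eq_map_OmegaR : Omega n = (OmegaR n).map Complex.ofReal := by
  rw [Omega, OmegaR, fromBlocks_map, Matrix.map_neg _ Complex.ofReal_neg,
    Matrix.map_one _ Complex.ofReal_zero Complex.ofReal_one]
  simp

theorem commute_Omega_diagonal_comp_elim {α : Type*} (f : α → ℂ) (g : Fin n → α) :
    Commute (Omega n) (diagonal fun i => f (Sum.elim g g i)) := by
  rw [show (fun i => f (Sum.elim g g i)) = Sum.elim (f ∘ g) (f ∘ g) from Sum.comp_elim f g g,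
    ← fromBlocks_diagonal, Omega, Commute, SemiconjBy, fromBlocks_multiply, fromBlocks_multiply]
  simp

theorem isHermitian_Omega_mul_map_ofReal {M : Matrix (Fin n ⊕ Fin n) (Fin n ⊕ Fin n) ℝ}
    (hM : (OmegaR n * M)ᵀ = OmegaR n * M) : (Omega n * M.map Complex.ofReal).IsHermitian := by
  have h : Omega n * M.map Complex.ofReal = (OmegaR n * M).map Complex.ofReal := by
    rw [Omega_eq_map_OmegaR]
    exact (Matrix.map_mul (f := Complex.ofRealHom)).symm
  rw [IsHermitian, h, ← conjTranspose_map _ fun x => (Complex.conj_ofReal x).symm,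
    conjTranspose_eq_transpose_of_trivial, hM]

end Omega

theorem transfer_function_conjSymplectic_general (n : ℕ)
    (γ : Fin n → ℝ) (hγ : ∀ i, 0 < γ i)
    (M : Matrix (Fin n ⊕ Fin n) (Fin n ⊕ Fin n) ℝ)
    (hM : (OmegaR n * M)ᵀ = OmegaR n * M) (ω : ℝ) :
    ConjSymplectic (transferFun n γ M ω) := by
  have hΩΓ := commute_Omega_diagonal_comp_elim (fun x : ℝ => (x : ℂ)) γ
  have hΩD := commute_Omega_diagonal_comp_elim (fun x : ℝ => ((√(2 * x) : ℝ) : ℂ)) γ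
  have hΩM := mul_conjTranspose_eq_neg_of_isHermitian_mul conjTranspose_Omega Omega_mul_Omega
    (isHermitian_Omega_mul_map_ofReal hM)
  refine mul_mul_conjTranspose_eq_self isUnit_Omega (isHermitian_diagonal_ofReal _) hΩD
    (mul_conjTranspose_smul_one_add_sub _ (isHermitian_diagonal_ofReal _) hΩΓ hΩM) ?_
  rw [diagonal_ofReal_sqrt_two_mul_self fun i => by cases i <;> exact (hγ _).le,
    show star (Complex.I * ω) = -(Complex.I * ω) by simp, neg_smul]
  abel

/-- If `𝓜` is a real Hamiltonian matrix (`(Ω𝓜)ᵀ = Ω𝓜`) and `iωI + Γ − 𝓜` is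
invertible, then the transfer function `S(ω)` is conjugate symplectic. -/
theorem transfer_function_conjSymplectic (n : ℕ) (hn : 1 ≤ n)
    (γ : Fin n → ℝ) (hγ : ∀ i, 0 < γ i)
    (M : Matrix (Fin n ⊕ Fin n) (Fin n ⊕ Fin n) ℝ)
    (hM : (OmegaR n * M)ᵀ = OmegaR n * M) (ω : ℝ)
    (hinv : IsUnit ((Complex.I * (ω : ℂ)) •
        (1 : Matrix (Fin n ⊕ Fin n) (Fin n ⊕ Fin n) ℂ) +
      diagonal (fun i => ((Sum.elim γ γ i : ℝ) : ℂ)) - M.map Complex.ofReal)) :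
    ConjSymplectic (transferFun n γ M ω) :=
  transfer_function_conjSymplectic_general n γ hγ M hM ω
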